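/- Let A_1,...,A_n be events in a probability space with P(A_i)>0 for all i. Then P(⋃_{i=1}^n A_i) ≥ n² / (∑_{i=1}^n ∑_{j=1}^n P(A_i ∩ A_j)/(P(A_i)P(A_j))). -/

import Mathlib

/-!
For `Y = ∑ i, 1_{A i} / P(A i)`, `E[Y] = n` and `E[Y²] = ∑ i ∑ j P(A i ∩ A j)/(P(A i)P(A j))`.
Since `Y` vanishes off `U = ⋃ i, A i`, Cauchy–Schwarz applied to `Y · 1_U` gives
`E[Y]² ≤ P(U) E[Y²]`.
-/

open MeasureTheory

open scoped ENNReal InnerProductSpace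

section CauchySchwarz

variable {α : Type*} [MeasurableSpace α] {μ : Measure α}

theorem integral_mul_eq_inner_toLp {f g : α → ℝ} (hf : MemLp f 2 μ) (hg : MemLp g 2 μ) :
    ∫ a, f a * g a ∂μ = ⟪hf.toLp f, hg.toLp g⟫_ℝ := by
  rw [L2.inner_def]
  refine integral_congr_ae ?_
  filter_upwards [hf.coeFn_toLp, hg.coeFn_toLp] with a hfa hga
  rw [hfa, hga, Real.inner_apply, mul_comm]

theorem sq_integral_mul_le_integral_sq_mul_integral_sq {f g : α → ℝ} (hf : MemLp f 2 μ)
    (hg : MemLp g 2 μ) :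
    (∫ a, f a * g a ∂μ) ^ 2 ≤ (∫ a, f a ^ 2 ∂μ) * ∫ a, g a ^ 2 ∂μ := by
  simp only [sq, integral_mul_eq_inner_toLp hf hg, integral_mul_eq_inner_toLp hf hf,
    integral_mul_eq_inner_toLp hg hg]
  exact real_inner_mul_inner_self_le _ _

theorem sq_integral_le_measureReal_mul_integral_sq {s : Set α} (hs : MeasurableSet s)
    (hμs : μ s ≠ ∞) {f : α → ℝ} (hf : MemLp f 2 μ) (hfs : ∀ a ∉ s, f a = 0) :
    (∫ a, f a ∂μ) ^ 2 ≤ μ.real s * ∫ a, f a ^ 2 ∂μ := by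
  have hind : MemLp (s.indicator fun _ => (1 : ℝ)) 2 μ := memLp_indicator_const 2 hs 1 (.inr hμs)
  have hmul : ∀ a, f a * s.indicator (fun _ => (1 : ℝ)) a = f a := by
    intro a
    by_cases ha : a ∈ s
    · simp [ha]
    · simp [ha, hfs a ha]
  have hind_sq : ∀ a, s.indicator (fun _ => (1 : ℝ)) a ^ 2 = s.indicator (fun _ => 1) a := by
    intro a
    by_cases ha : a ∈ s <;> simp [ha]
  have h := sq_integral_mul_le_integral_sq_mul_integral_sq hf hind
  simp only [hmul, hind_sq, integral_indicator_const _ hs, smul_eq_mul, mul_one] at h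
  exact h.trans_eq (mul_comm _ _)

end CauchySchwarz

section IndicatorSum

variable {α ι : Type*} [Fintype ι]

noncomputable def indicatorSum (A : ι → Set α) (w : ι → ℝ) (a : α) : ℝ :=
  ∑ i, (A i).indicator (fun _ => w i) a

variable {A : ι → Set α} {w : ι → ℝ}

theorem indicatorSum_eq_zero_of_notMem_iUnion {a : α} (ha : a ∉ ⋃ i, A i) :
    indicatorSum A w a = 0 :=
  Finset.sum_eq_zero fun i _ =>
    Set.indicator_of_notMem (fun hi => ha (Set.mem_iUnion_of_mem i hi)) _

theorem indicatorSum_sq (a : α) :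
    indicatorSum A w a ^ 2 =
      indicatorSum (fun p : ι × ι => A p.1 ∩ A p.2) (fun p => w p.1 * w p.2) a := by
  simp only [indicatorSum, sq, Finset.sum_mul_sum, Set.inter_indicator_mul,
    Fintype.sum_prod_type]

variable [MeasurableSpace α] {μ : Measure α}

theorem memLp_indicatorSum (hA : ∀ i, MeasurableSet (A i)) (hμA : ∀ i, μ (A i) ≠ ∞) :
    MemLp (indicatorSum A w) 2 μ :=
  memLp_finsetSum _ fun i _ => memLp_indicator_const 2 (hA i) _ (.inr (hμA i))

theorem integral_indicatorSum (hA : ∀ i, MeasurableSet (A i)) (hμA : ∀ i, μ (A i) ≠ ∞) :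
    ∫ a, indicatorSum A w a ∂μ = ∑ i, μ.real (A i) * w i := by
  simp only [indicatorSum]
  rw [integral_finsetSum _ fun i _ =>
    (integrableOn_const (hμA i)).integrable_indicator (hA i)]
  simp only [integral_indicator_const _ (hA _), smul_eq_mul]

theorem integral_indicatorSum_sq (hA : ∀ i, MeasurableSet (A i)) (hμA : ∀ i, μ (A i) ≠ ∞) :
    ∫ a, indicatorSum A w a ^ 2 ∂μ = ∑ i, ∑ j, μ.real (A i ∩ A j) * (w i * w j) := by
  simp only [indicatorSum_sq]
  exact (integral_indicatorSum (fun p => (hA p.1).inter (hA p.2))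
    fun p => (measure_inter_lt_top_of_left_ne_top (hμA p.1)).ne).trans (Fintype.sum_prod_type _)

end IndicatorSum

theorem union_lower_bound_general {Ω : Type*} [MeasurableSpace Ω] (P : Measure Ω)
    (n : ℕ) (A : Fin n → Set Ω)
    (hmeas : ∀ i, MeasurableSet (A i)) (hpos : ∀ i, 0 < (P (A i)).toReal) :
    (P (⋃ i, A i)).toReal ≥
      (n : ℝ) ^ 2 /
        ∑ i, ∑ j, (P (A i ∩ A j)).toReal / ((P (A i)).toReal * (P (A j)).toReal) := by
  have hfin : ∀ i, P (A i) ≠ ∞ := fun i => (ENNReal.toReal_pos_iff.1 (hpos i)).2.ne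
  have hfin_union : P (⋃ i, A i) ≠ ∞ :=
    ((measure_iUnion_fintype_le P A).trans_lt (ENNReal.sum_lt_top.2 fun i _ => (hfin i).lt_top)).ne
  set Y := indicatorSum A fun i => (P.real (A i))⁻¹
  have hmean : ∫ ω, Y ω ∂P = n := by
    simp only [Y, integral_indicatorSum hmeas hfin, measureReal_def]
    simp [fun i => mul_inv_cancel₀ (hpos i).ne']
  have hsecond : ∫ ω, Y ω ^ 2 ∂P =
      ∑ i, ∑ j, (P (A i ∩ A j)).toReal / ((P (A i)).toReal * (P (A j)).toReal) := by
    simp only [Y, integral_indicatorSum_sq hmeas hfin, div_eq_mul_inv, mul_inv, measureReal_def]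
  have key : (∫ ω, Y ω ∂P) ^ 2 ≤ P.real (⋃ i, A i) * ∫ ω, Y ω ^ 2 ∂P :=
    sq_integral_le_measureReal_mul_integral_sq (MeasurableSet.iUnion hmeas) hfin_union
    (memLp_indicatorSum hmeas hfin) fun ω hω => indicatorSum_eq_zero_of_notMem_iUnion hω
  rw [hmean, hsecond] at key
  exact div_le_of_le_mul₀ (by positivity) ENNReal.toReal_nonneg key

/-- Second-moment lower bound on the probability of a union:
`P(⋃ i, A i) ≥ n² / (∑ i ∑ j P(A i ∩ A j) / (P(A i) P(A j)))`. -/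
theorem union_lower_bound {Ω : Type*} [MeasurableSpace Ω] (P : Measure Ω)
    [IsProbabilityMeasure P] (n : ℕ) (hn : 0 < n) (A : Fin n → Set Ω)
    (hmeas : ∀ i, MeasurableSet (A i)) (hpos : ∀ i, 0 < (P (A i)).toReal) :
    (P (⋃ i, A i)).toReal ≥
      (n : ℝ) ^ 2 /
        ∑ i, ∑ j, (P (A i ∩ A j)).toReal / ((P (A i)).toReal * (P (A j)).toReal) :=
  union_lower_bound_general P n A hmeas hpos
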